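/- Let Φ be a reduced crystallographic root system with positive roots Φ⁺ and let 2ρ be the sum of positive roots. For every positive root α, the length of the reflection s_α in the Weyl group satisfies ℓ(s_α) ≤ ⟨α^∨, 2ρ⟩ − 1. -/
import Mathlib


open Classical

/-- A reduced crystallographic root system with a chosen positive system,
inside a `ℚ`-vector space `V`.  `pairing α β` is `⟨α^∨, β⟩`. -/
structure RootSystemData (V : Type*) [AddCommGroup V] [Module ℚ V] where
  Φ : Set V
  finite : Φ.Finite
  pairing : V → Module.Dual ℚ V
  zero_not_mem : (0 : V) ∉ Φ
  neg_mem : ∀ α ∈ Φ, -α ∈ Φ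
  pairing_self : ∀ α ∈ Φ, pairing α α = 2
  pairing_int : ∀ α ∈ Φ, ∀ β ∈ Φ, ∃ n : ℤ, pairing α β = (n : ℚ)
  reflect_mem : ∀ α ∈ Φ, ∀ β ∈ Φ, β - pairing α β • α ∈ Φ
  reduced : ∀ α ∈ Φ, ∀ c : ℚ, c • α ∈ Φ → c = 1 ∨ c = -1
  pos : Set V
  pos_sub : pos ⊆ Φ
  mem_pos_or_neg : ∀ α ∈ Φ, α ∈ pos ∨ -α ∈ pos
  not_pos_and_neg : ∀ α ∈ pos, -α ∉ pos
  pos_add : ∀ α ∈ pos, ∀ β ∈ pos, α + β ∈ Φ → α + β ∈ pos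

namespace RootSystemData

variable {V : Type*} [AddCommGroup V] [Module ℚ V] (R : RootSystemData V)

/-- The reflection `s_α` as a linear endomorphism of `V`. -/
noncomputable def refl (α : V) : Module.End ℚ V := 1 - (R.pairing α).smulRight α

/-- Indicator function `Φ⁺` of the positive roots. -/
noncomputable def ind (β : V) : ℤ := if β ∈ R.pos then 1 else 0

/-- `2ρ`, the sum of the positive roots. -/
noncomputable def twoRho : V := ∑ᶠ α ∈ R.pos, α

/-- The length of a (Weyl group) element: the number of positive roots sent to
negative roots. -/
noncomputable def len (f : Module.End ℚ V) : ℕ := {α | α ∈ R.pos ∧ f α ∉ R.pos}.ncard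

/-- `f` belongs to the Weyl group, i.e. is a product of reflections. -/
def IsWeyl (f : Module.End ℚ V) : Prop :=
  f ∈ Submonoid.closure {g : Module.End ℚ V | ∃ α ∈ R.pos, g = R.refl α}

/-- A quantum root: `ℓ(s_α) = ⟨α^∨, 2ρ⟩ - 1`. -/
def IsQuantumRoot (α : V) : Prop :=
  α ∈ R.pos ∧ (R.len (R.refl α) : ℚ) = R.pairing α R.twoRho - 1

/-- Edges of the quantum Bruhat graph `QB(W)`, together with their weights:
a Bruhat edge `w → w s_α` of weight `0` when `ℓ(w s_α) = ℓ(w) + 1`, and a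
quantum edge of weight `α^∨` when `ℓ(w s_α) = ℓ(w) + 1 - ⟨α^∨, 2ρ⟩`. -/
def Edge (u v : Module.End ℚ V) (ω : Module.Dual ℚ V) : Prop :=
  ∃ α ∈ R.pos, v = u * R.refl α ∧
    ((R.len v = R.len u + 1 ∧ ω = 0) ∨
     ((R.len v : ℚ) = (R.len u : ℚ) + 1 - R.pairing α R.twoRho ∧ ω = R.pairing α))

/-- Paths in the quantum Bruhat graph; `Path R u v ω n` means there is a path
from `u` to `v` with `n` edges and total weight `ω`. -/
inductive Path (R : RootSystemData V) :
    Module.End ℚ V → Module.End ℚ V → Module.Dual ℚ V → ℕ → Prop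
  | nil (u : Module.End ℚ V) : Path R u u 0 0
  | cons {u v w : Module.End ℚ V} {ω' ω : Module.Dual ℚ V} {n : ℕ} :
      R.Edge u v ω' → Path R v w ω n → Path R u w (ω' + ω) (n + 1)

/-- `ω` is the weight `wt(u ⇒ v)` of a shortest path from `u` to `v` in `QB(W)`. -/
def IsWt (u v : Module.End ℚ V) (ω : Module.Dual ℚ V) : Prop :=
  ∃ n, R.Path u v ω n ∧ ∀ (m : ℕ) (ω' : Module.Dual ℚ V), R.Path u v ω' m → n ≤ m

/-- The distance `d(u ⇒ v)` in the quantum Bruhat graph. -/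
noncomputable def qbDist (u v : Module.End ℚ V) : ℕ :=
  sInf {n | ∃ ω, R.Path u v ω n}

/-- The cone of nonnegative integral sums of positive coroots; `μ ≤ ν` in the
coroot lattice iff `ν - μ` lies in this cone. -/
def corootCone : AddSubmonoid (Module.Dual ℚ V) :=
  AddSubmonoid.closure {d | ∃ α ∈ R.pos, d = R.pairing α}

/-- The coroot lattice `ℤΦ^∨`. -/
def corootLattice : AddSubgroup (Module.Dual ℚ V) :=
  AddSubgroup.closure {d | ∃ α ∈ R.pos, d = R.pairing α}


/-! ### Auxiliary lemmas -/

/-- The integer sequence used to analyse powers of a product of two reflections.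
`(pqAux a n).1` and `(pqAux a n).2` are the coordinates of `(s_α s_β)^n β`. -/
def pqAux (a : ℤ) : ℕ → ℤ × ℤ
  | 0 => (0, 1)
  | n + 1 => ((a - 1) * (pqAux a n).1 + (pqAux a n).2, -a * (pqAux a n).1 - (pqAux a n).2)

lemma pqAux_rec (a : ℤ) (n : ℕ) :
    (pqAux a (n + 2)).1 = (a - 2) * (pqAux a (n + 1)).1 - (pqAux a n).1 := by
  simp only [pqAux]; ring

lemma seq_lt_succ (t : ℤ) (ht : 2 ≤ t) (s : ℕ → ℤ) (h0 : s 0 = 0) (h1 : s 1 = 1)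
    (hrec : ∀ n, s (n + 2) = t * s (n + 1) - s n) : ∀ n, 0 ≤ s n ∧ s n < s (n + 1) := by
  intro n
  induction n with
  | zero => simp [h0, h1]
  | succ n ih =>
    obtain ⟨h0n, hlt⟩ := ih
    refine ⟨le_of_lt (lt_of_le_of_lt h0n hlt), ?_⟩
    rw [hrec]
    nlinarith

lemma seq_pos (t : ℤ) (ht : 2 ≤ t) (s : ℕ → ℤ) (h0 : s 0 = 0) (h1 : s 1 = 1)
    (hrec : ∀ n, s (n + 2) = t * s (n + 1) - s n) : ∀ n, 0 < s (n + 1) := by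
  intro n
  induction n with
  | zero => simp [h1]
  | succ n ih => exact lt_trans ih (seq_lt_succ t ht s h0 h1 hrec (n + 1)).2

lemma seq_ne_zero (t : ℤ) (ht : 2 ≤ t ∨ t ≤ -2) (s : ℕ → ℤ) (h0 : s 0 = 0) (h1 : s 1 = 1)
    (hrec : ∀ n, s (n + 2) = t * s (n + 1) - s n) : ∀ n, s (n + 1) ≠ 0 := by
  rcases ht with ht | ht
  · intro n
    exact (seq_pos t ht s h0 h1 hrec n).ne'
  · intro n hzero
    have hpos := seq_pos (-t) (by omega) (fun m => (-1) ^ (m + 1) * s m)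
      (by simp [h0]) (by simp [h1])
      (by
        intro m
        rw [hrec m]
        ring) n
    simp only [hzero, mul_zero] at hpos
    exact lt_irrefl 0 hpos

lemma refl_apply (α v : V) : R.refl α v = v - R.pairing α v • α := rfl

lemma refl_refl {α : V} (hα : α ∈ R.Φ) (v : V) : R.refl α (R.refl α v) = v := by
  simp only [refl_apply, map_sub, map_smul, R.pairing_self α hα, smul_eq_mul]
  module

lemma refl_mul_self {α : V} (hα : α ∈ R.Φ) : R.refl α * R.refl α = 1 := by
  ext v
  exact R.refl_refl hα v

lemma refl_mem {α : V} (hα : α ∈ R.Φ) {β : V} (hβ : β ∈ R.Φ) : R.refl α β ∈ R.Φ :=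
  R.reflect_mem α hα β hβ

lemma ne_zero_of_mem {α : V} (hα : α ∈ R.Φ) : α ≠ 0 :=
  fun h => R.zero_not_mem (h ▸ hα)

/-- Two non-proportional roots are linearly independent. -/
lemma indep_aux {α β : V} (hα : α ∈ R.Φ) (hβ : β ∈ R.Φ) (h1 : β ≠ α) (h2 : β ≠ -α)
    {x y : ℚ} (h : x • α + y • β = 0) : x = 0 ∧ y = 0 := by
  have hα0 : α ≠ 0 := R.ne_zero_of_mem hα
  by_cases hy : y = 0
  · subst hy
    simp only [zero_smul, add_zero] at h
    rcases smul_eq_zero.mp h with hx | h0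
    · exact ⟨hx, rfl⟩
    · exact absurd h0 hα0
  · exfalso
    have hβeq : β = (-x / y) • α := by
      have : y • β = (-x) • α := by
        rw [neg_smul]
        linear_combination (norm := module) h
      have := congrArg (fun v => y⁻¹ • v) this
      simpa [smul_smul, inv_mul_cancel₀ hy, div_eq_inv_mul, mul_comm] using this
    rcases R.reduced α hα (-x / y) (hβeq ▸ hβ) with hc | hc
    · exact h1 (by rw [hβeq, hc, one_smul])
    · exact h2 (by rw [hβeq, hc, neg_one_smul])

lemma exists_pow_fix {g g' : Module.End ℚ V} (hmem : ∀ v ∈ R.Φ, g v ∈ R.Φ)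
    (hinv : g' * g = 1) {β : V} (hβ : β ∈ R.Φ) :
    ∃ k, 1 ≤ k ∧ (g ^ k) β = β := by
  have hpow : ∀ n, (g ^ n) β ∈ R.Φ := by
    intro n
    induction n with
    | zero => simpa using hβ
    | succ n ih =>
      rw [pow_succ']
      exact hmem _ ih
  have hcancel : ∀ j : ℕ, g' ^ j * g ^ j = 1 := by
    intro j
    induction j with
    | zero => simp
    | succ j ih =>
      rw [pow_succ g' j, pow_succ' g j, mul_assoc, ← mul_assoc g' g, hinv, one_mul, ih]
  haveI : Finite ↥R.Φ := R.finite.to_subtype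
  obtain ⟨m, n, hmn, heq⟩ :=
    Finite.exists_ne_map_eq_of_infinite (fun j : ℕ => (⟨(g ^ j) β, hpow j⟩ : ↥R.Φ))
  have heq' : (g ^ m) β = (g ^ n) β := congrArg Subtype.val heq
  have key : ∀ a b : ℕ, a < b → (g ^ a) β = (g ^ b) β → ∃ k, 1 ≤ k ∧ (g ^ k) β = β := by
    intro a b hab he
    refine ⟨b - a, by omega, ?_⟩
    have h1 : (g' ^ a) ((g ^ a) β) = β := by
      have := congrFun (congrArg (DFunLike.coe) (hcancel a)) β
      simpa using this
    have h2 : (g' ^ a) ((g ^ b) β) = (g ^ (b - a)) β := by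
      have hb : g ^ b = g ^ a * g ^ (b - a) := by
        rw [← pow_add]
        congr 1
        omega
      have : g' ^ a * g ^ b = g ^ (b - a) := by
        rw [hb, ← mul_assoc, hcancel a, one_mul]
      have := congrFun (congrArg (DFunLike.coe) this) β
      simpa using this
    rw [← h2, ← he, h1]
  rcases lt_or_gt_of_ne hmn with h | h
  · exact key m n h heq'
  · exact key n m h heq'.symm
/-- The key finiteness bound: `⟨α^∨,β⟩⟨β^∨,α⟩ ∈ {1,2,3}` when `⟨α^∨,β⟩ ≠ 0`
and `β ≠ ±α`. -/
lemma pairing_mul_bounds {α β : V} (hα : α ∈ R.Φ) (hβ : β ∈ R.Φ)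
    (h1 : β ≠ α) (h2 : β ≠ -α) {c d : ℤ}
    (hc : R.pairing α β = (c : ℚ)) (hd : R.pairing β α = (d : ℚ)) (hc0 : c ≠ 0) :
    1 ≤ c * d ∧ c * d ≤ 3 := by
  set g : Module.End ℚ V := R.refl α * R.refl β with hg
  have hmem : ∀ v ∈ R.Φ, g v ∈ R.Φ := by
    intro v hv
    exact R.refl_mem hα (R.refl_mem hβ hv)
  have hinv : (R.refl β * R.refl α) * g = 1 := by
    rw [hg, mul_assoc, ← mul_assoc (R.refl α), R.refl_mul_self hα, one_mul,
      R.refl_mul_self hβ]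
  obtain ⟨k, hk1, hfix⟩ := R.exists_pow_fix hmem hinv hβ
  have hgβ : g β = (c : ℚ) • α + (-1 : ℚ) • β := by
    show R.refl α (R.refl β β) = _
    simp only [refl_apply, R.pairing_self β hβ, map_sub, map_smul, hc, smul_eq_mul]
    module
  have hgα : g α = ((c : ℚ) * (d : ℚ) - 1) • α + (-(d : ℚ)) • β := by
    show R.refl α (R.refl β α) = _
    simp only [refl_apply, map_sub, map_smul, R.pairing_self α hα, hc, hd, smul_eq_mul]
    module
  have hcoord : ∀ n : ℕ, (g ^ n) β =
      ((c * (pqAux (c * d) n).1 : ℤ) : ℚ) • α + (((pqAux (c * d) n).2 : ℤ) : ℚ) • β := by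
    intro n
    induction n with
    | zero => simp [pqAux]
    | succ n ih =>
      rw [pow_succ', Module.End.mul_apply, ih]
      simp only [map_add, map_smul, hgα, hgβ, pqAux]
      push_cast
      module
  have hk := hcoord k
  rw [hfix] at hk
  have h0 : ((c * (pqAux (c * d) k).1 : ℤ) : ℚ) • α
      + ((((pqAux (c * d) k).2 : ℤ) : ℚ) - 1) • β = 0 := by
    linear_combination (norm := module) hk.symm
  obtain ⟨hx, -⟩ := R.indep_aux hα hβ h1 h2 h0
  have hpk : (pqAux (c * d) k).1 = 0 := by
    have : (c : ℚ) * ((pqAux (c * d) k).1 : ℚ) = 0 := by push_cast at hx; linarith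
    rcases mul_eq_zero.mp this with h | h
    · exact absurd (by exact_mod_cast h) hc0
    · exact_mod_cast h
  by_contra hcon
  have hcd : c * d ≤ 0 ∨ 4 ≤ c * d := by omega
  obtain ⟨k', hk'⟩ : ∃ k', k = k' + 1 := ⟨k - 1, by omega⟩
  have hne := seq_ne_zero (c * d - 2) (by omega)
    (fun n => (pqAux (c * d) n).1)
    (by simp [pqAux]) (by simp [pqAux])
    (fun n => pqAux_rec (c * d) n) k'
  rw [← hk'] at hne
  exact hne hpk

/-- If `⟨α^∨, β⟩ ≥ 1` and `β ≠ ±α` then `β - α` is a root. -/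
lemma sub_mem_Phi {α β : V} (hα : α ∈ R.Φ) (hβ : β ∈ R.Φ) (h1 : β ≠ α) (h2 : β ≠ -α)
    {c : ℤ} (hc : R.pairing α β = (c : ℚ)) (h1c : 1 ≤ c) : β - α ∈ R.Φ := by
  obtain ⟨d, hd⟩ := R.pairing_int β hβ α hα
  obtain ⟨hlb, hub⟩ := R.pairing_mul_bounds hα hβ h1 h2 hc hd (by omega)
  by_cases hc1 : c = 1
  · have := R.reflect_mem α hα β hβ
    rw [hc, hc1] at this
    simpa using this
  · have hd1 : d = 1 := by
      have h2c : 2 ≤ c := by omega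
      nlinarith
    have := R.reflect_mem β hβ α hα
    rw [hd, hd1] at this
    have := R.neg_mem _ this
    simpa using this

/-- If `α, β` are positive roots with `⟨α^∨, β⟩ = -m < 0` then `β + mα` is a
positive root. -/
lemma add_nsmul_mem_pos : ∀ m : ℕ, 1 ≤ m → ∀ α ∈ R.pos, ∀ β ∈ R.pos,
    R.pairing α β = -(m : ℚ) → β + (m : ℚ) • α ∈ R.pos := by
  intro m
  induction m using Nat.strong_induction_on with
  | _ m ih =>
    intro hm α hα β hβ hpair
    have hαΦ : α ∈ R.Φ := R.pos_sub hα
    have hβΦ : β ∈ R.Φ := R.pos_sub hβ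
    have hm1 : (1 : ℚ) ≤ (m : ℚ) := by exact_mod_cast hm
    have hβα : β ≠ α := by
      intro h
      rw [h, R.pairing_self α hαΦ] at hpair
      linarith
    have hβnα : β ≠ -α := by
      intro h
      exact R.not_pos_and_neg α hα (h ▸ hβ)
    have hsum1Φ : β + α ∈ R.Φ := by
      have hnb : -β ∈ R.Φ := R.neg_mem β hβΦ
      have h1' : -β ≠ α := fun h => hβnα (by rw [← h]; simp)
      have h2' : -β ≠ -α := fun h => hβα (by
        have := congrArg Neg.neg h
        simpa using this)
      have hcm : R.pairing α (-β) = ((m : ℤ) : ℚ) := by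
        rw [map_neg, hpair]; push_cast; ring
      have hsub := R.sub_mem_Phi hαΦ hnb h1' h2' hcm (by exact_mod_cast hm)
      have h3 := R.neg_mem _ hsub
      have h4 : -(-β - α) = β + α := by abel
      rwa [h4] at h3
    have hsum1pos : β + α ∈ R.pos := R.pos_add β hβ α hα hsum1Φ
    have htopΦ : β + (m : ℚ) • α ∈ R.Φ := by
      have := R.reflect_mem α hαΦ β hβΦ
      rw [hpair] at this
      simpa [sub_eq_add_neg, neg_smul] using this
    rcases Nat.lt_or_ge m 2 with hm2 | hm2
    · have : m = 1 := by omega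
      subst this
      simpa using hsum1pos
    rcases Nat.lt_or_ge m 3 with hm3 | hm3
    · have : m = 2 := by omega
      subst this
      have heq : β + ((2 : ℕ) : ℚ) • α = (β + α) + α := by push_cast; module
      rw [heq] at htopΦ ⊢
      exact R.pos_add _ hsum1pos α hα htopΦ
    · have hpair' : R.pairing α (β + α) = -(((m - 2 : ℕ) : ℚ)) := by
        rw [map_add, hpair, R.pairing_self α hαΦ]
        have : ((m - 2 : ℕ) : ℚ) = (m : ℚ) - 2 := by
          push_cast [Nat.cast_sub (by omega : 2 ≤ m)]
          ring
        rw [this]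
        ring
      have hmid := ih (m - 2) (by omega) (by omega) α hα (β + α) hsum1pos hpair'
      have heq : β + (m : ℚ) • α = ((β + α) + ((m - 2 : ℕ) : ℚ) • α) + α := by
        push_cast [Nat.cast_sub (by omega : 2 ≤ m)]
        module
      rw [heq] at htopΦ ⊢
      exact R.pos_add _ hmid α hα htopΦ

/-- Positive roots sent to negative roots by `s_α` have `⟨α^∨, β⟩ ≥ 1`. -/
lemma exists_one_le_pairing {α β : V} (hα : α ∈ R.pos) (hβ : β ∈ R.pos)
    (h : R.refl α β ∉ R.pos) : ∃ n : ℤ, R.pairing α β = (n : ℚ) ∧ 1 ≤ n := by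
  obtain ⟨n, hn⟩ := R.pairing_int α (R.pos_sub hα) β (R.pos_sub hβ)
  refine ⟨n, hn, ?_⟩
  by_contra hneg
  push_neg at hneg
  rcases eq_or_lt_of_le (by omega : n ≤ 0) with h0 | hlt
  · apply h
    have : R.refl α β = β := by
      rw [refl_apply, hn, h0]
      simp
    rw [this]
    exact hβ
  · have hm1 : 1 ≤ (-n).toNat := by omega
    have hpair : R.pairing α β = -(((-n).toNat : ℕ) : ℚ) := by
      rw [hn]
      have : (((-n).toNat : ℕ) : ℚ) = ((-n : ℤ) : ℚ) := by exact_mod_cast Int.toNat_of_nonneg (by omega : (0:ℤ) ≤ -n)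
      rw [this]
      push_cast
      ring
    have := R.add_nsmul_mem_pos (-n).toNat hm1 α hα β hβ hpair
    apply h
    have heq : R.refl α β = β + (((-n).toNat : ℕ) : ℚ) • α := by
      rw [refl_apply, hpair]
      module
    rw [heq]
    exact this
/-- For every positive root `α`, `ℓ(s_α) ≤ ⟨α^∨, 2ρ⟩ - 1`. -/
theorem length_reflection_le (α : V) (hα : α ∈ R.pos) :
    (R.len (R.refl α) : ℚ) ≤ R.pairing α R.twoRho - 1 := by
  classical
  have hαΦ : α ∈ R.Φ := R.pos_sub hα
  have hfin : R.pos.Finite := R.finite.subset R.pos_sub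
  set S : Finset V := hfin.toFinset with hS
  set N : Finset V := S.filter (fun β => ¬ (R.refl α β ∈ R.pos)) with hN
  set P : Finset V := S.filter (fun β => R.refl α β ∈ R.pos) with hP
  have htwo : R.pairing α R.twoRho = ∑ β ∈ S, R.pairing α β := by
    rw [twoRho, ← hfin.coe_toFinset, finsum_mem_coe_finset, ← hS, map_sum]
  have hsplit : (∑ β ∈ P, R.pairing α β) + ∑ β ∈ N, R.pairing α β
      = ∑ β ∈ S, R.pairing α β :=
    Finset.sum_filter_add_sum_filter_not S _ _
  have hmemS : ∀ b ∈ S, b ∈ R.pos := by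
    intro b hb
    rw [hS, Set.Finite.mem_toFinset] at hb
    exact hb
  have hP0 : ∑ β ∈ P, R.pairing α β = 0 := by
    have gmem : ∀ b : V, b ∈ P → R.refl α b ∈ P := by
      intro b hb
      rw [hP, Finset.mem_filter] at hb ⊢
      refine ⟨?_, ?_⟩
      · rw [hS, Set.Finite.mem_toFinset]
        exact hb.2
      · rw [R.refl_refl hαΦ b]
        exact hmemS b hb.1
    refine Finset.sum_involution (fun b _ => R.refl α b) ?_ ?_ (fun b hb => gmem b hb) ?_
    · intro b _
      rw [refl_apply, map_sub, map_smul, R.pairing_self α hαΦ]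
      simp only [smul_eq_mul]
      ring
    · intro b _ hfb hcon
      apply hfb
      have heq0 : R.pairing α b • α = 0 := by
        rw [refl_apply] at hcon
        linear_combination (norm := module) -hcon
      rcases smul_eq_zero.mp heq0 with h | h
      · exact h
      · exact absurd h (R.ne_zero_of_mem hαΦ)
    · intro b _
      exact R.refl_refl hαΦ b
  have hlen : (R.len (R.refl α) : ℚ) = (N.card : ℚ) := by
    have hset : {β | β ∈ R.pos ∧ R.refl α β ∉ R.pos} = (↑N : Set V) := by
      ext b
      simp only [hN, Finset.coe_filter, Set.mem_setOf_eq, hS, Set.Finite.mem_toFinset]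
    rw [len, hset, Set.ncard_coe_finset]
  have hαN : α ∈ N := by
    rw [hN, Finset.mem_filter]
    refine ⟨by rw [hS, Set.Finite.mem_toFinset]; exact hα, ?_⟩
    have : R.refl α α = -α := by
      rw [refl_apply, R.pairing_self α hαΦ]
      module
    rw [this]
    exact R.not_pos_and_neg α hα
  have hge1 : ∀ β ∈ N, (1 : ℚ) ≤ R.pairing α β := by
    intro β hβ
    rw [hN, Finset.mem_filter] at hβ
    obtain ⟨n, hn, h1n⟩ := R.exists_one_le_pairing hα (hmemS β hβ.1) hβ.2
    rw [hn]
    exact_mod_cast h1n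
  have hsub : (1 : ℚ) ≤ ∑ β ∈ N, (R.pairing α β - 1) := by
    have h1 := Finset.single_le_sum (f := fun β => R.pairing α β - 1)
      (fun β hβ => by
        have := hge1 β hβ
        linarith) hαN
    have h2 : R.pairing α α = 2 := R.pairing_self α hαΦ
    linarith
  have hdist : ∑ β ∈ N, (R.pairing α β - 1)
      = (∑ β ∈ N, R.pairing α β) - (N.card : ℚ) := by
    rw [Finset.sum_sub_distrib]
    simp
  rw [hlen, htwo, ← hsplit, hP0, zero_add]
  linarith
end RootSystemData
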